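/- arXiv:math/0210483 — 8 statements merged into one kernel-verified Lean document; each statement's English description precedes it below -/
import Mathlib

section
/- Let A be an abelian group such that for every positive integer n the n-torsion subgroup A[n] = {a ∈ A : n·a = 0} is finite. Let D = {a ∈ A : for every positive integer n there exists b ∈ A with n·b = a} be the subgroup of infinitely divisible elements of A. Then D is a divisible group: for every a ∈ D and every positive integer n there exists b ∈ D with n·b = a. -/
/-- Generic content of Lemma 5.2: if every `n`-torsion subgroup of `A` is finite,
then the subgroup of infinitely divisible elements of `A` is divisible. -/
theorem stmt_0 {A : Type*} [AddCommGroup A]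
    (hfin : ∀ n : ℕ, 0 < n → {a : A | n • a = 0}.Finite)
    (a : A) (ha : ∀ n : ℕ, 0 < n → ∃ b : A, n • b = a)
    (n : ℕ) (hn : 0 < n) :
    ∃ b : A, (∀ m : ℕ, 0 < m → ∃ c : A, m • c = b) ∧ n • b = a := by
  -- S m : solutions b of n•b = a that are divisible by m
  set S : ℕ → Set A := fun m => {b : A | n • b = a ∧ ∃ c : A, m • c = b} with hS
  obtain ⟨b₀, hb₀⟩ := ha n hn
  -- each S m is finite
  have hSfin : ∀ m, (S m).Finite := by
    intro m
    refine ((hfin n hn).image (fun x => x + b₀)).subset ?_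
    rintro b ⟨hb, -⟩
    exact ⟨b - b₀, by simp [smul_sub, hb, hb₀], by simp⟩
  -- each S m (m > 0) is nonempty
  have hSne : ∀ m, 0 < m → (S m).Nonempty := by
    intro m hm
    obtain ⟨c, hc⟩ := ha (n * m) (Nat.mul_pos hn hm)
    exact ⟨m • c, by rw [← mul_smul]; exact hc, c, rfl⟩
  -- S is antitone along divisibility
  have hmono : ∀ {m k : ℕ}, m ∣ k → S k ⊆ S m := by
    rintro m k ⟨d, rfl⟩ b ⟨hb, c, hc⟩
    exact ⟨hb, d • c, by rw [mul_smul] at hc; exact hc⟩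
  -- pick m₀ minimizing the cardinality of S (m₀!)
  set g : ℕ → ℕ := fun m => (S m.factorial).ncard with hg
  have hne : (Set.range g).Nonempty := ⟨g 0, 0, rfl⟩
  obtain ⟨m₀, hm₀⟩ := Nat.sInf_mem hne
  obtain ⟨b, hbS⟩ := hSne m₀.factorial m₀.factorial_pos
  have key : ∀ m, 0 < m → b ∈ S m := by
    intro m hm
    have h1 : S (max m m₀).factorial ⊆ S m₀.factorial :=
      hmono (Nat.factorial_dvd_factorial (le_max_right m m₀))
    have h2 : g m₀ ≤ g (max m m₀) := hm₀ ▸ Nat.sInf_le ⟨max m m₀, rfl⟩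
    have heq : S (max m m₀).factorial = S m₀.factorial :=
      Set.eq_of_subset_of_ncard_le h1 h2 (hSfin _)
    have : b ∈ S (max m m₀).factorial := heq ▸ hbS
    exact hmono (Nat.dvd_factorial hm (le_max_left m m₀)) this
  exact ⟨b, fun m hm => (key m hm).2, hbS.1⟩
end

section
/- Let G be a finite abelian group and B : G × G → ℚ/ℤ a ℤ-bilinear pairing that is nondegenerate on both sides (if B(x,y) = 0 for all y then x = 0, and if B(x,y) = 0 for all x then y = 0). Let φ, ψ : G → G be additive endomorphisms such that B(φ(x), y) = B(x, ψ(y)) for all x, y ∈ G, and such that the kernels of φ and ψ have the same cardinality. Then the annihilator {y ∈ G : B(x,y) = 0 for all x with φ(x) = 0} of ker(φ) equals the image ψ(G). -/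
/-!
Elements of `ker φ` pair trivially with the annihilator `A` of `ker φ`, so left nondegeneracy
embeds `ker φ` into the dual `Hom(G ⧸ A, ℚ/ℤ)`, which has at most `[G : A]` elements. Hence
`|A| ≤ |G| / |ker φ| = |G| / |ker ψ| = |im ψ|`, while adjointness gives `im ψ ≤ A`.
-/

open Function

namespace AddCircle

noncomputable def ratCastHom : AddCircle (1 : ℚ) →+ AddCircle (1 : ℝ) :=
  QuotientAddGroup.map _ _ (Rat.castHom ℝ).toAddMonoidHom <|
    AddSubgroup.zmultiples_le.2 ⟨1, by simp⟩

lemma ratCastHom_injective : Injective ratCastHom := by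
  refine (injective_iff_map_eq_zero _).2 fun q hq => ?_
  induction q using QuotientAddGroup.induction_on with
  | H q =>
    obtain ⟨n, hn⟩ := (coe_eq_zero_iff _).1 (hq : ((q : ℝ) : AddCircle (1 : ℝ)) = 0)
    exact (coe_eq_zero_iff _).2 ⟨n, by simp at hn ⊢; exact_mod_cast hn⟩

noncomputable def ratToCircleChar : AddChar (AddCircle (1 : ℚ)) ℂ where
  toFun q := toCircle (ratCastHom q)
  map_zero_eq_one' := by simp
  map_add_eq_mul' a b := by simp [toCircle_add]

lemma ratToCircleChar_injective : Injective ratToCircleChar :=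
  Subtype.val_injective.comp <| (injective_toCircle one_ne_zero).comp ratCastHom_injective

end AddCircle

section RatCircleDual

variable (H : Type*) [AddCommGroup H]

-- `ℚ/ℤ` embeds in `ℂˣ`, so its dual over a finite group is counted by the complex characters.
lemma injective_ratToCircleChar_compAddMonoidHom :
    Injective (AddCircle.ratToCircleChar.compAddMonoidHom : (H →+ AddCircle (1 : ℚ)) → _) :=
  AddCircle.ratToCircleChar.compAddMonoidHom_injective_right AddCircle.ratToCircleChar_injective

instance [Finite H] : Finite (H →+ AddCircle (1 : ℚ)) :=
  .of_injective _ (injective_ratToCircleChar_compAddMonoidHom H)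

lemma card_addMonoidHom_ratCircle_le [Finite H] :
    Nat.card (H →+ AddCircle (1 : ℚ)) ≤ Nat.card H := by
  cases nonempty_fintype H
  calc Nat.card (H →+ AddCircle (1 : ℚ))
      ≤ Nat.card (AddChar H ℂ) :=
        Nat.card_le_card_of_injective _ (injective_ratToCircleChar_compAddMonoidHom H)
    _ ≤ Nat.card H := by simpa only [Nat.card_eq_fintype_card] using AddChar.card_addChar_le H ℂ

end RatCircleDual

namespace AddMonoidHom

variable {G H M : Type*} [AddCommGroup G] [AddCommGroup H] [AddCommGroup M]

def annihilator (B : G →+ H →+ M) (K : AddSubgroup G) : AddSubgroup H :=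
  (B.comp K.subtype).flip.ker

lemma mem_annihilator {B : G →+ H →+ M} {K : AddSubgroup G} {y : H} :
    y ∈ B.annihilator K ↔ ∀ x ∈ K, B x y = 0 := by
  simp [annihilator, AddMonoidHom.ext_iff]

lemma card_le_index_annihilator [Finite H] {B : G →+ H →+ AddCircle (1 : ℚ)} (hB : Injective B)
    (K : AddSubgroup G) : Nat.card K ≤ (B.annihilator K).index := by
  let restrict (k : K) : H ⧸ B.annihilator K →+ AddCircle (1 : ℚ) :=
    QuotientAddGroup.lift _ (B k) fun y hy => mem_annihilator.1 hy k k.2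
  have : Injective restrict := fun k k' h => Subtype.val_injective <| hB <| by
    ext y; exact DFunLike.congr_fun h (y : H ⧸ B.annihilator K)
  exact (Nat.card_le_card_of_injective restrict this).trans (card_addMonoidHom_ratCircle_le _)

end AddMonoidHom

theorem stmt_2_general {G : Type*} [AddCommGroup G] [Finite G]
    (B : G → G → AddCircle (1 : ℚ))
    (hBl : ∀ x x' y : G, B (x + x') y = B x y + B x' y)
    (hBr : ∀ x y y' : G, B x (y + y') = B x y + B x y')
    (hndl : ∀ x : G, (∀ y : G, B x y = 0) → x = 0)
    (φ ψ : G →+ G)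
    (hadj : ∀ x y : G, B (φ x) y = B x (ψ y))
    (hcard : Nat.card {x : G // φ x = 0} = Nat.card {y : G // ψ y = 0}) :
    {y : G | ∀ x : G, φ x = 0 → B x y = 0} = Set.range ψ := by
  let B' : G →+ G →+ AddCircle (1 : ℚ) :=
    .mk' (fun x => .mk' (B x) (hBr x)) fun x x' => AddMonoidHom.ext (hBl x x')
  have hB' : Injective B' :=
    (injective_iff_map_eq_zero B').2 fun x hx => hndl x (DFunLike.congr_fun hx)
  have hrange : ψ.range ≤ B'.annihilator φ.ker := by
    rintro _ ⟨z, rfl⟩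
    refine AddMonoidHom.mem_annihilator.2 fun x hx => ?_
    change B x (ψ z) = 0
    rw [← hadj, AddMonoidHom.mem_ker.1 hx]
    exact DFunLike.congr_fun B'.map_zero z
  have hle : Nat.card (B'.annihilator φ.ker) ≤ Nat.card ψ.range := by
    have hkerpos : 0 < Nat.card ψ.ker := Nat.card_pos
    refine Nat.le_of_mul_le_mul_right ?_ hkerpos
    calc Nat.card (B'.annihilator φ.ker) * Nat.card ψ.ker
        = Nat.card (B'.annihilator φ.ker) * Nat.card φ.ker := congrArg _ hcard.symm
      _ ≤ Nat.card (B'.annihilator φ.ker) * (B'.annihilator φ.ker).index :=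
        Nat.mul_le_mul_left _ (AddMonoidHom.card_le_index_annihilator hB' _)
      _ = Nat.card ψ.range * Nat.card ψ.ker := by
        rw [AddSubgroup.card_mul_index, ← ψ.ker.card_mul_index, AddSubgroup.index_ker, mul_comm]
  rw [← AddMonoidHom.coe_range, AddSubgroup.eq_of_le_of_card_ge hrange hle]
  ext y
  rw [SetLike.mem_coe, AddMonoidHom.mem_annihilator]
  rfl

/-- Generic content of Lemma 5.4: for a nondegenerate bilinear pairing on a finite
abelian group and adjoint endomorphisms `φ`, `ψ` with kernels of equal cardinality,
the annihilator of `ker φ` is the image of `ψ`. -/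
theorem stmt_2 {G : Type*} [AddCommGroup G] [Finite G]
    (B : G → G → AddCircle (1 : ℚ))
    (hBl : ∀ x x' y : G, B (x + x') y = B x y + B x' y)
    (hBr : ∀ x y y' : G, B x (y + y') = B x y + B x y')
    (hndl : ∀ x : G, (∀ y : G, B x y = 0) → x = 0)
    (hndr : ∀ y : G, (∀ x : G, B x y = 0) → y = 0)
    (φ ψ : G →+ G)
    (hadj : ∀ x y : G, B (φ x) y = B x (ψ y))
    (hcard : Nat.card {x : G // φ x = 0} = Nat.card {y : G // ψ y = 0}) :
    {y : G | ∀ x : G, φ x = 0 → B x y = 0} = Set.range ψ :=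
  stmt_2_general B hBl hBr hndl φ ψ hadj hcard
end

section
/- Let G be a finite abelian group and B : G × G → ℚ/ℤ a ℤ-bilinear pairing that is nondegenerate on both sides (if B(x,y) = 0 for all y then x = 0, and if B(x,y) = 0 for all x then y = 0). Let φ : G → G be an additive endomorphism and u : G → G an additive automorphism such that φ∘u = u∘φ and B(φ(x), y) = B(x, u(φ(y))) for all x, y ∈ G. Then for all positive integers m and n, the annihilator of ker(φ^m) inside ker(φ^n), namely {y ∈ G : φ^n(y) = 0 and B(x,y) = 0 for all x with φ^m(x) = 0}, equals φ^m(ker(φ^{m+n})). -/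
/-!
The pairing identifies `G` with its character group (a nondegenerate pairing gives an injection
`G → Hom(G, ℚ/ℤ)`, and the latter has at most `|G|` elements), so a subgroup is the annihilator
of its annihilator. Iterating the adjunction gives `B (φ^m x) y = B x (φ^m (u^m y))`, so the
annihilator of `im φ^m` is `ker φ^m`; hence the annihilator of `ker φ^m` is `im φ^m`, and
intersecting with `ker φ^n` gives `φ^m (ker φ^(m+n))`.
-/

open Function

noncomputable def ratCircleToRealCircle : AddCircle (1 : ℚ) →+ AddCircle (1 : ℝ) :=
  QuotientAddGroup.map _ _ (Rat.castHom ℝ).toAddMonoidHom <| by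
    rintro _ ⟨k, rfl⟩
    exact ⟨k, by simp⟩

lemma ratCircleToRealCircle_injective : Injective ratCircleToRealCircle := by
  refine (injective_iff_map_eq_zero _).2 fun a ha => ?_
  induction a using QuotientAddGroup.induction_on with
  | H q =>
    obtain ⟨k, hk⟩ := (AddCircle.coe_eq_zero_iff (1 : ℝ)).1 ha
    refine (AddCircle.coe_eq_zero_iff (1 : ℚ)).2 ⟨k, ?_⟩
    simp only [zsmul_eq_mul, mul_one, RingHom.toAddMonoidHom_eq_coe, AddMonoidHom.coe_coe,
      eq_ratCast] at hk ⊢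
    exact_mod_cast hk

noncomputable def ratCircleAddChar : AddChar (AddCircle (1 : ℚ)) ℂ :=
  Circle.coeHom.compAddChar (AddCircle.toCircle_addChar.compAddMonoidHom ratCircleToRealCircle)

lemma ratCircleAddChar_injective : Injective ratCircleAddChar :=
  Circle.coe_injective.comp <|
    (AddCircle.injective_toCircle one_ne_zero).comp ratCircleToRealCircle_injective

namespace CharacterModule

variable {G : Type*} [AddCommGroup G]

lemma injective_compAddChar :
    Injective fun χ : CharacterModule G => ratCircleAddChar.compAddMonoidHom χ :=
  AddChar.compAddMonoidHom_injective_right _ ratCircleAddChar_injective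

instance [Finite G] : Finite (CharacterModule G) :=
  have := Fintype.ofFinite G
  Finite.of_injective _ injective_compAddChar

lemma nat_card_le [Finite G] : Nat.card (CharacterModule G) ≤ Nat.card G := by
  have := Fintype.ofFinite G
  calc Nat.card (CharacterModule G) ≤ Nat.card (AddChar G ℂ) :=
        Nat.card_le_card_of_injective _ injective_compAddChar
    _ ≤ Nat.card G := by
        simpa only [Nat.card_eq_fintype_card] using AddChar.card_addChar_le G ℂ

lemma surjective_of_injective [Finite G] {f : G → CharacterModule G} (hf : Injective f) :
    Surjective f :=
  (hf.bijective_of_nat_card_le nat_card_le).2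

end CharacterModule

section Pairing

variable {G : Type*} [AddCommGroup G] (B : G →+ CharacterModule G)

lemma mem_of_forall_annihilator_apply_eq_zero [Finite G] (hB : Injective B)
    {H : AddSubgroup G} {y : G} (hy : ∀ x, (∀ h ∈ H, B x h = 0) → B x y = 0) : y ∈ H := by
  by_contra hyH
  have hy0 : (QuotientAddGroup.mk' H) y ≠ 0 := by
    rwa [QuotientAddGroup.mk'_apply, ne_eq, QuotientAddGroup.eq_zero_iff]
  obtain ⟨c, hc⟩ := CharacterModule.exists_character_apply_ne_zero_of_ne_zero hy0
  obtain ⟨x, hx⟩ := CharacterModule.surjective_of_injective hB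
    ((c : G ⧸ H →+ AddCircle (1 : ℚ)).comp (QuotientAddGroup.mk' H))
  have hBx : ∀ g, B x g = c (QuotientAddGroup.mk' H g) := fun g => DFunLike.congr_fun hx g
  refine hc ((hBx y).symm.trans (hy x fun h hh => ?_))
  rw [hBx, QuotientAddGroup.mk'_apply, (QuotientAddGroup.eq_zero_iff h).2 hh, map_zero]

lemma apply_pow_apply_eq {f g : AddMonoid.End G} (h : ∀ x y, B (f x) y = B x (g y)) (k : ℕ)
    (x y : G) : B ((f ^ k) x) y = B x ((g ^ k) y) := by
  induction k generalizing x with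
  | zero => rfl
  | succ k ih => rw [pow_succ, AddMonoid.End.coe_mul, comp_apply, ih, pow_succ',
    AddMonoid.End.coe_mul, comp_apply, h]

lemma forall_ker_apply_eq_zero_iff_mem_range [Finite G] (hB : Injective B)
    {f w : AddMonoid.End G} (hw : Surjective w) (hf : ∀ x y, B (f x) y = B x (f (w y))) (y : G) :
    (∀ x, f x = 0 → B x y = 0) ↔ y ∈ Set.range f := by
  constructor
  · intro hy
    refine mem_of_forall_annihilator_apply_eq_zero B hB (H := AddMonoidHom.range f) fun x hx => ?_
    refine hy x ((injective_iff_map_eq_zero B).1 hB _ ?_)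
    ext z
    rw [hf]
    exact hx _ ⟨_, rfl⟩
  · rintro ⟨z, rfl⟩ x hx
    obtain ⟨z, rfl⟩ := hw z
    rw [← hf, hx, map_zero]
    rfl

end Pairing

theorem stmt_3_general {G : Type*} [AddCommGroup G] [Finite G]
    (B : G → G → AddCircle (1 : ℚ))
    (hBl : ∀ x x' y : G, B (x + x') y = B x y + B x' y)
    (hBr : ∀ x y y' : G, B x (y + y') = B x y + B x y')
    (hndl : ∀ x : G, (∀ y : G, B x y = 0) → x = 0)
    (φ : AddMonoid.End G) (u : G ≃+ G)
    (hcomm : ∀ x : G, φ (u x) = u (φ x))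
    (hadj : ∀ x y : G, B (φ x) y = B x (u (φ y)))
    (m n : ℕ) :
    {y : G | (φ ^ n) y = 0 ∧ ∀ x : G, (φ ^ m) x = 0 → B x y = 0}
      = ⇑(φ ^ m) '' {y : G | (φ ^ (m + n)) y = 0} := by
  let B' : G →+ CharacterModule G :=
    AddMonoidHom.mk' (fun x => AddMonoidHom.mk' (B x) (hBr x)) fun x x' => by
      ext y; exact hBl x x' y
  have hB' : Injective B' :=
    (injective_iff_map_eq_zero B').2 fun x hx => hndl x fun y => DFunLike.congr_fun hx y
  let v : AddMonoid.End G := u.toAddMonoidHom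
  have hvφ : Commute v φ := AddMonoidHom.ext fun x => (hcomm x).symm
  have hadj_pow : ∀ x y, B ((φ ^ m) x) y = B x ((φ ^ m) ((v ^ m) y)) := by
    intro x y
    have := apply_pow_apply_eq B' (g := v * φ) hadj m x y
    rwa [hvφ.mul_pow, ((hvφ.pow_pow m m).eq : v ^ m * φ ^ m = _)] at this
  have hv_surj : Surjective (v ^ m) := by
    rw [AddMonoid.End.coe_pow]
    exact u.surjective.iterate m
  have hperp : ∀ y, (∀ x, (φ ^ m) x = 0 → B x y = 0) ↔ y ∈ Set.range (φ ^ m) :=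
    forall_ker_apply_eq_zero_iff_mem_range B' hB' hv_surj hadj_pow
  ext y
  simp only [Set.mem_ofPred_eq, hperp, Set.mem_range, Set.mem_image, add_comm m n, pow_add,
    AddMonoid.End.coe_mul, comp_apply]
  constructor
  · rintro ⟨hy, z, rfl⟩
    exact ⟨z, hy, rfl⟩
  · rintro ⟨z, hz, rfl⟩
    exact ⟨hz, z, rfl⟩

/-- Generic content of Lemma 5.5: for a nondegenerate bilinear pairing on a finite
abelian group, an endomorphism `φ` and a commuting automorphism `u` with
`B (φ x) y = B x (u (φ y))`, the annihilator of `ker (φ^m)` inside `ker (φ^n)`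
equals `φ^m (ker (φ^(m+n)))`. -/
theorem stmt_3 {G : Type*} [AddCommGroup G] [Finite G]
    (B : G → G → AddCircle (1 : ℚ))
    (hBl : ∀ x x' y : G, B (x + x') y = B x y + B x' y)
    (hBr : ∀ x y y' : G, B x (y + y') = B x y + B x y')
    (hndl : ∀ x : G, (∀ y : G, B x y = 0) → x = 0)
    (hndr : ∀ y : G, (∀ x : G, B x y = 0) → y = 0)
    (φ : AddMonoid.End G) (u : G ≃+ G)
    (hcomm : ∀ x : G, φ (u x) = u (φ x))
    (hadj : ∀ x y : G, B (φ x) y = B x (u (φ y)))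
    (m n : ℕ) (hm : 0 < m) (hn : 0 < n) :
    {y : G | (φ ^ n) y = 0 ∧ ∀ x : G, (φ ^ m) x = 0 → B x y = 0}
      = ⇑(φ ^ m) '' {y : G | (φ ^ (m + n)) y = 0} :=
  stmt_3_general B hBl hBr hndl φ u hcomm hadj m n
end

section
/- Let A be an abelian group, φ : A → A an additive endomorphism, and D a subgroup of A with φ(D) = D. Let φ̄ denote the endomorphism of A/D induced by φ. Then for all positive integers m and n, the quotient map A → A/D induces a group isomorphism from ker(φ^m)/φ^n(ker(φ^{n+m})) onto ker(φ̄^m)/φ̄^n(ker(φ̄^{n+m})). -/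
/-!
Write `K_k = ker φ^k` and `K̄_k = ker φ̄^k`. Because `φ^k` maps `D` onto `D`, every class in
`K̄_k` lifts to `K_k`: if `φ^k a ∈ D`, pick `d ∈ D` with `φ^k d = φ^k a` and take `a - d`. So the
quotient map restricts to a surjection `K_m → K̄_m`, and it remains to see that an element
`x ∈ K_m` whose class lies in `φ̄^n K̄_{n+m}` already lies in `φ^n K_{n+m}`. Lifting
`[x] = φ̄^n [b]` with `b ∈ K_{n+m}`, the difference `x - φ^n b` lies in `D ∩ K_m`, which is again
`φ^n` of an element of `D ∩ K_{n+m}`.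
-/

open Function QuotientAddGroup

noncomputable def QuotientAddGroup.equivOfSurjectiveOfComapEq {G H : Type*} [AddCommGroup G]
    [AddCommGroup H] (f : G →+ H) (hf : Surjective f) {N : AddSubgroup G} {M : AddSubgroup H}
    (h : M.comap f = N) : G ⧸ N ≃+ H ⧸ M :=
  (quotientAddEquivOfEq (by rw [← h, ← AddMonoidHom.comap_ker, ker_mk'])).trans
    (quotientKerEquivOfSurjective ((mk' M).comp f) ((mk'_surjective M).comp hf))

theorem QuotientAddGroup.equivOfSurjectiveOfComapEq_mk {G H : Type*} [AddCommGroup G]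
    [AddCommGroup H] (f : G →+ H) (hf : Surjective f) {N : AddSubgroup G} {M : AddSubgroup H}
    (h : M.comap f = N) (x : G) :
    equivOfSurjectiveOfComapEq f hf h x = (f x : H ⧸ M) :=
  rfl

section InducedEndomorphism

variable {A : Type*} [AddCommGroup A] {D : AddSubgroup A} {φ : AddMonoid.End A}
  {φbar : AddMonoid.End (A ⧸ D)}

theorem mk_pow_apply (hbar : ∀ a : A, φbar a = φ a) (k : ℕ) (a : A) :
    ((φ ^ k) a : A ⧸ D) = (φbar ^ k) a :=
  Semiconj.iterate_right (f := ((↑) : A → A ⧸ D)) (fun a ↦ (hbar a).symm) k a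

theorem mk_mem_ker_pow_iff (hbar : ∀ a : A, φbar a = φ a) (k : ℕ) (a : A) :
    (a : A ⧸ D) ∈ AddMonoidHom.ker (φbar ^ k) ↔ (φ ^ k) a ∈ D := by
  change (φbar ^ k) (a : A ⧸ D) = 0 ↔ _
  rw [← mk_pow_apply hbar, eq_zero_iff]

theorem mk_mem_ker_pow_of_mem_ker (hbar : ∀ a : A, φbar a = φ a) {k : ℕ} {a : A}
    (ha : a ∈ AddMonoidHom.ker (φ ^ k)) : (a : A ⧸ D) ∈ AddMonoidHom.ker (φbar ^ k) := by
  rw [mk_mem_ker_pow_iff hbar, show (φ ^ k) a = 0 from ha]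
  exact D.zero_mem

theorem surjOn_pow_of_image_eq (hφD : ⇑φ '' (D : Set A) = D) (k : ℕ) :
    Set.SurjOn ⇑(φ ^ k) D D := by
  rw [AddMonoid.End.coe_pow]
  exact Set.SurjOn.iterate hφD.ge k

theorem exists_mem_ker_pow_mk_eq (hφD : ⇑φ '' (D : Set A) = D) (hbar : ∀ a : A, φbar a = φ a)
    {k : ℕ} {y : A ⧸ D} (hy : y ∈ AddMonoidHom.ker (φbar ^ k)) :
    ∃ a ∈ AddMonoidHom.ker (φ ^ k), (a : A ⧸ D) = y := by
  obtain ⟨a, rfl⟩ := mk_surjective y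
  obtain ⟨d, hd, hda⟩ := surjOn_pow_of_image_eq hφD k ((mk_mem_ker_pow_iff hbar k a).1 hy)
  refine ⟨a - d, ?_, ?_⟩
  · change (φ ^ k) (a - d) = 0
    rw [map_sub, hda, sub_self]
  · rw [mk_sub, (eq_zero_iff d).2 hd, sub_zero]

theorem mk_mem_map_ker_pow_iff (hφD : ⇑φ '' (D : Set A) = D) (hbar : ∀ a : A, φbar a = φ a)
    {m n : ℕ} {x : A} (hx : (φ ^ m) x = 0) :
    (x : A ⧸ D) ∈ (AddMonoidHom.ker (φbar ^ (n + m))).map ((φbar ^ n) : A ⧸ D →+ A ⧸ D) ↔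
      x ∈ (AddMonoidHom.ker (φ ^ (n + m))).map ((φ ^ n) : A →+ A) := by
  have hpow (a : A) : (φ ^ (n + m)) a = (φ ^ m) ((φ ^ n) a) := by
    rw [add_comm, pow_add]
    rfl
  constructor
  · rintro ⟨_, hy, hyx⟩
    obtain ⟨b, hb, rfl⟩ := exists_mem_ker_pow_mk_eq hφD hbar hy
    have hb : (φ ^ (n + m)) b = 0 := hb
    have hxb : x - (φ ^ n) b ∈ D := by
      rw [← eq_zero_iff, mk_sub, mk_pow_apply hbar, sub_eq_zero]
      exact hyx.symm
    obtain ⟨c, hc, hcx⟩ := surjOn_pow_of_image_eq hφD n hxb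
    refine ⟨b + c, ?_, ?_⟩
    · change (φ ^ (n + m)) (b + c) = 0
      rw [map_add, hb, hpow, hcx, map_sub, ← hpow, hx, hb, sub_zero, zero_add]
    · change (φ ^ n) (b + c) = x
      rw [map_add, hcx, add_sub_cancel]
  · rintro ⟨b, hb, rfl⟩
    exact ⟨b, mk_mem_ker_pow_of_mem_ker hbar hb, (mk_pow_apply hbar n b).symm⟩

variable (hbar : ∀ a : A, φbar a = φ a)

def kerPowMk (k : ℕ) : AddMonoidHom.ker (φ ^ k) →+ AddMonoidHom.ker (φbar ^ k) :=
  ((mk' D).comp (AddMonoidHom.ker (φ ^ k)).subtype).codRestrict _ fun x ↦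
    mk_mem_ker_pow_of_mem_ker hbar x.2

theorem kerPowMk_surjective (hφD : ⇑φ '' (D : Set A) = D) (k : ℕ) :
    Surjective (kerPowMk hbar k) := by
  rintro ⟨y, hy⟩
  obtain ⟨a, ha, rfl⟩ := exists_mem_ker_pow_mk_eq hφD hbar hy
  exact ⟨⟨a, ha⟩, rfl⟩

theorem comap_kerPowMk_map_ker_pow (hφD : ⇑φ '' (D : Set A) = D) (m n : ℕ) :
    AddSubgroup.comap (kerPowMk hbar m)
        (((AddMonoidHom.ker (φbar ^ (n + m))).map ((φbar ^ n) : A ⧸ D →+ A ⧸ D)).addSubgroupOf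
          (AddMonoidHom.ker (φbar ^ m))) =
      ((AddMonoidHom.ker (φ ^ (n + m))).map ((φ ^ n) : A →+ A)).addSubgroupOf
        (AddMonoidHom.ker (φ ^ m)) := by
  ext ⟨x, hx⟩
  exact mk_mem_map_ker_pow_iff hφD hbar hx

end InducedEndomorphism

theorem stmt_4_general {A : Type*} [AddCommGroup A] (D : AddSubgroup A)
    (φ : AddMonoid.End A) (hφD : ⇑φ '' (D : Set A) = (D : Set A))
    (φbar : AddMonoid.End (A ⧸ D))
    (hbar : ∀ a : A, φbar ((a : A) : A ⧸ D) = ((φ a : A) : A ⧸ D))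
    (m n : ℕ) :
    ∃ e : (AddMonoidHom.ker (φ ^ m) ⧸
            ((AddSubgroup.map ((φ ^ n) : A →+ A)
                (AddMonoidHom.ker (φ ^ (n + m)))).addSubgroupOf
              (AddMonoidHom.ker (φ ^ m)))) ≃+
          (AddMonoidHom.ker (φbar ^ m) ⧸
            ((AddSubgroup.map ((φbar ^ n) : (A ⧸ D) →+ (A ⧸ D))
                (AddMonoidHom.ker (φbar ^ (n + m)))).addSubgroupOf
              (AddMonoidHom.ker (φbar ^ m)))),
      ∀ (x : A) (hx : x ∈ AddMonoidHom.ker (φ ^ m))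
        (hx' : ((x : A) : A ⧸ D) ∈ AddMonoidHom.ker (φbar ^ m)),
        e (QuotientAddGroup.mk ⟨x, hx⟩) = QuotientAddGroup.mk ⟨((x : A) : A ⧸ D), hx'⟩ :=
  ⟨equivOfSurjectiveOfComapEq _ (kerPowMk_surjective hbar hφD m)
      (comap_kerPowMk_map_ker_pow hbar hφD m n),
    fun x hx _ ↦ equivOfSurjectiveOfComapEq_mk (kerPowMk hbar m) _ _ ⟨x, hx⟩⟩

/-- Generic content of the snake-lemma argument for Proposition 5.1: if `φ` maps the
subgroup `D` onto itself and `φbar` is the induced endomorphism of `A ⧸ D`, then the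
quotient map induces an isomorphism
`ker (φ^m) / φ^n (ker (φ^(n+m))) ≃+ ker (φbar^m) / φbar^n (ker (φbar^(n+m)))`. -/
theorem stmt_4 {A : Type*} [AddCommGroup A] (D : AddSubgroup A)
    (φ : AddMonoid.End A) (hφD : ⇑φ '' (D : Set A) = (D : Set A))
    (φbar : AddMonoid.End (A ⧸ D))
    (hbar : ∀ a : A, φbar ((a : A) : A ⧸ D) = ((φ a : A) : A ⧸ D))
    (m n : ℕ) (hm : 0 < m) (hn : 0 < n) :
    ∃ e : (AddMonoidHom.ker (φ ^ m) ⧸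
            ((AddSubgroup.map ((φ ^ n) : A →+ A)
                (AddMonoidHom.ker (φ ^ (n + m)))).addSubgroupOf
              (AddMonoidHom.ker (φ ^ m)))) ≃+
          (AddMonoidHom.ker (φbar ^ m) ⧸
            ((AddSubgroup.map ((φbar ^ n) : (A ⧸ D) →+ (A ⧸ D))
                (AddMonoidHom.ker (φbar ^ (n + m)))).addSubgroupOf
              (AddMonoidHom.ker (φbar ^ m)))),
      ∀ (x : A) (hx : x ∈ AddMonoidHom.ker (φ ^ m))
        (hx' : ((x : A) : A ⧸ D) ∈ AddMonoidHom.ker (φbar ^ m)),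
        e (QuotientAddGroup.mk ⟨x, hx⟩) = QuotientAddGroup.mk ⟨((x : A) : A ⧸ D), hx'⟩ :=
  stmt_4_general D φ hφD φbar hbar m n
end

section
/- Let p be a prime number and r a positive integer such that p divides r² + r + 1. Then p² divides (r+1)^{6(r+1)} − r^{6r}. -/
/-- If `s * s = 0` in a commutative ring, then `(1 + a*s)^n = 1 + n*a*s`. -/
lemma aux_pow {R : Type*} [CommRing R] {s : R} (hs : s * s = 0) (a : R) (n : ℕ) :
    (1 + a * s) ^ n = 1 + (n : R) * a * s := by
  induction n with
  | zero => simp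
  | succ n ih =>
      rw [pow_succ, ih]
      push_cast
      linear_combination ((n : R) * a * a) * hs

/-- The key congruence of Lemma 6.1: if `p` is prime and `p ∣ r² + r + 1`, then
`p² ∣ (r+1)^(6(r+1)) − r^(6r)`. -/
theorem stmt_6 (p : ℕ) (hp : p.Prime) (r : ℕ) (hr : 0 < r)
    (hdvd : (p : ℤ) ∣ (r : ℤ) ^ 2 + (r : ℤ) + 1) :
    (p : ℤ) ^ 2 ∣ ((r : ℤ) + 1) ^ (6 * (r + 1)) - (r : ℤ) ^ (6 * r) := by
  suffices h : ((((r : ℤ) + 1) ^ (6 * (r + 1)) - (r : ℤ) ^ (6 * r) : ℤ) : ZMod (p ^ 2)) = 0 by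
    have := (ZMod.intCast_zmod_eq_zero_iff_dvd _ (p ^ 2)).mp h
    exact_mod_cast this
  have hdvd2 : ((p ^ 2 : ℕ) : ℤ) ∣ ((r : ℤ) ^ 2 + (r : ℤ) + 1) * ((r : ℤ) ^ 2 + (r : ℤ) + 1) := by
    push_cast
    rw [sq]; exact mul_dvd_mul hdvd hdvd
  have hss : ((r : ZMod (p ^ 2)) ^ 2 + (r : ZMod (p ^ 2)) + 1) *
      ((r : ZMod (p ^ 2)) ^ 2 + (r : ZMod (p ^ 2)) + 1) = 0 := by
    have := (ZMod.intCast_zmod_eq_zero_iff_dvd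
      (((r : ℤ) ^ 2 + (r : ℤ) + 1) * ((r : ℤ) ^ 2 + (r : ℤ) + 1)) (p ^ 2)).mpr hdvd2
    push_cast at this
    exact this
  push_cast
  set R := ZMod (p ^ 2)
  have h1 : ((r : R) + 1) ^ 6 =
      1 + (-(2 * ((r : R) + 2))) * ((r : R) ^ 2 + (r : R) + 1) := by
    linear_combination ((r : R) + 2) ^ 2 * hss
  have h2 : (r : R) ^ 6 = 1 + (2 * ((r : R) - 1)) * ((r : R) ^ 2 + (r : R) + 1) := by
    linear_combination ((r : R) - 1) ^ 2 * hss
  rw [pow_mul, pow_mul, h1, h2, aux_pow hss, aux_pow hss]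
  push_cast
  linear_combination (-4 : R) * hss
end

section
/- Let p be a prime number with p ≡ 1 (mod 3) and r a positive integer such that p divides r² + r + 1. Then p² divides (r+1)^{(r+1)(p−1)} − r^{r(p−1)}. -/
/-- Binomial expansion mod `P^2`: `(x + t*P)^(n+1) ≡ x^(n+1) + (n+1)*x^n*t*P`. -/
lemma aux_pow_modsq (x t P : ℤ) : ∀ n : ℕ,
    P ^ 2 ∣ (x + t * P) ^ (n + 1) - (x ^ (n + 1) + (n + 1 : ℕ) * x ^ n * t * P)
  | 0 => by simp
  | n + 1 => by
    obtain ⟨d, hd⟩ := aux_pow_modsq x t P n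
    refine ⟨d * (x + t * P) + ((n : ℤ) + 1) * x ^ n * t ^ 2, ?_⟩
    have h : (x + t * P) ^ (n + 1) =
        (x ^ (n + 1) + ((n : ℤ) + 1) * x ^ n * t * P) + P ^ 2 * d := by
      push_cast at hd; linarith
    rw [pow_succ, h]
    push_cast
    ring

/-- Lemma 6.1: if `p ≡ 1 (mod 3)` is prime and `p ∣ r² + r + 1`, then
`p² ∣ (r+1)^((r+1)(p−1)) − r^(r(p−1))`. -/
theorem stmt_7 (p : ℕ) (hp : p.Prime) (hp3 : p % 3 = 1) (r : ℕ) (hr : 0 < r)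
    (hdvd : (p : ℤ) ∣ (r : ℤ) ^ 2 + (r : ℤ) + 1) :
    (p : ℤ) ^ 2 ∣ ((r : ℤ) + 1) ^ ((r + 1) * (p - 1)) - (r : ℤ) ^ (r * (p - 1)) := by
  -- p ≥ 7
  have hp7 : 7 ≤ p := by
    by_contra h
    push_neg at h
    interval_cases p <;> revert hp hp3 <;> decide
  have hPpos : (0 : ℤ) < (p : ℤ) := by exact_mod_cast hp.pos
  have hPprime : Prime ((p : ℤ)) := Nat.prime_iff_prime_int.mp hp
  obtain ⟨s, hs⟩ := hdvd
  -- p does not divide r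
  have hpr : ¬ ((p : ℤ) ∣ (r : ℤ)) := by
    intro h
    have h1 : (p : ℤ) ∣ 1 := by
      have : (1 : ℤ) = ((r : ℤ) ^ 2 + r + 1) - r * r - r := by ring
      rw [this]
      exact dvd_sub (dvd_sub ⟨s, hs⟩ (h.mul_left _)) h
    have := Int.le_of_dvd one_pos h1
    omega
  -- p does not divide r + 1
  have hpr1 : ¬ ((p : ℤ) ∣ ((r : ℤ) + 1)) := by
    intro h
    have h1 : (p : ℤ) ∣ 1 := by
      have : (1 : ℤ) = ((r : ℤ) ^ 2 + r + 1) - ((r : ℤ) + 1) * r := by ring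
      rw [this]
      exact dvd_sub ⟨s, hs⟩ (h.mul_right _)
    have := Int.le_of_dvd one_pos h1
    omega
  -- Fermat's little theorem for r and r+1
  have hβ' : ((r : ℤ)) ^ (p - 1) ≡ 1 [ZMOD p] :=
    Int.ModEq.pow_card_sub_one_eq_one hp
      ((hPprime.coprime_iff_not_dvd.mpr hpr).symm)
  have hα' : ((r : ℤ) + 1) ^ (p - 1) ≡ 1 [ZMOD p] :=
    Int.ModEq.pow_card_sub_one_eq_one hp
      ((hPprime.coprime_iff_not_dvd.mpr hpr1).symm)
  obtain ⟨β, hβ⟩ : ∃ β : ℤ, (r : ℤ) ^ (p - 1) = 1 + β * p := by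
    obtain ⟨c, hc⟩ := (Int.ModEq.dvd hβ'.symm)
    exact ⟨c, by linarith⟩
  obtain ⟨α, hα⟩ : ∃ α : ℤ, ((r : ℤ) + 1) ^ (p - 1) = 1 + α * p := by
    obtain ⟨c, hc⟩ := (Int.ModEq.dvd hα'.symm)
    exact ⟨c, by linarith⟩
  -- (F1) : p ∣ 3β + (r-1)s
  have hF1 : (p : ℤ) ∣ 3 * β + ((r : ℤ) - 1) * s := by
    -- r^3 = 1 + (r-1)*s*p
    have hr3 : (r : ℤ) ^ 3 = 1 + (((r : ℤ) - 1) * s) * p := by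
      have : (r : ℤ) ^ 3 - 1 = ((r : ℤ) - 1) * ((r : ℤ) ^ 2 + r + 1) := by ring
      rw [hs] at this; linarith
    -- two expansions of r^(3(p-1))
    have e1 : ((r : ℤ) ^ (p - 1)) ^ 3 = 1 + 3 * β * p + (3 * β ^ 2 + β ^ 3 * p) * p ^ 2 := by
      rw [hβ]; ring
    have e2 : (p : ℤ) ^ 2 ∣ ((r : ℤ) ^ 3) ^ (p - 1)
        - (1 + ((p : ℤ) - 1) * (((r : ℤ) - 1) * s) * p) := by
      have h := aux_pow_modsq 1 (((r : ℤ) - 1) * s) (p : ℤ) (p - 2)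
      have hpe : p - 2 + 1 = p - 1 := by omega
      rw [hpe] at h
      have hcast : ((p - 1 : ℕ) : ℤ) = (p : ℤ) - 1 := by
        push_cast [Nat.cast_sub hp.one_le]; ring
      rw [hcast] at h
      simpa [← hr3] using h
    have e3 : ((r : ℤ) ^ 3) ^ (p - 1) = ((r : ℤ) ^ (p - 1)) ^ 3 := by
      rw [← pow_mul, ← pow_mul, Nat.mul_comm]
    rw [e3, e1] at e2
    -- p^2 ∣ (3β - (p-1)(r-1)s) p + stuff*p^2 ⇒ p ∣ 3β - (p-1)(r-1)s
    have e4 : (p : ℤ) ∣ 3 * β - ((p : ℤ) - 1) * (((r : ℤ) - 1) * s) := by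
      obtain ⟨d, hd⟩ := e2
      refine ⟨d - (3 * β ^ 2 + β ^ 3 * p), ?_⟩
      apply mul_left_cancel₀ (ne_of_gt hPpos)
      linear_combination hd
    -- (p-1) ≡ -1 mod p
    have e5 : (p : ℤ) ∣ (3 * β + ((r : ℤ) - 1) * s)
        - (3 * β - ((p : ℤ) - 1) * (((r : ℤ) - 1) * s)) := by
      refine ⟨((r : ℤ) - 1) * s, by ring⟩
    have := dvd_add e4 e5
    simpa using this
  -- (F3) : p ∣ r^(2p-4) - r
  have hF3 : (p : ℤ) ∣ (r : ℤ) ^ (2 * p - 4) - r := by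
    have h1 : (p : ℤ) ∣ (r : ℤ) ^ (2 * (p - 1)) - 1 := by
      have : ((r : ℤ)) ^ (2 * (p - 1)) = ((r : ℤ) ^ (p - 1)) ^ 2 := by
        rw [← pow_mul, Nat.mul_comm]
      rw [this, hβ]
      exact ⟨2 * β + β ^ 2 * p, by ring⟩
    have h2 : (p : ℤ) ∣ (r : ℤ) ^ 3 - 1 := by
      have : (r : ℤ) ^ 3 - 1 = ((r : ℤ) - 1) * ((r : ℤ) ^ 2 + r + 1) := by ring
      rw [this, hs]
      exact Dvd.dvd.mul_left ⟨s, by ring⟩ _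
    have h3 : (p : ℤ) ∣ (r : ℤ) ^ 2 * ((r : ℤ) ^ (2 * p - 4) - r) := by
      have he : 2 * (p - 1) = (2 * p - 4) + 2 := by omega
      have : (r : ℤ) ^ 2 * ((r : ℤ) ^ (2 * p - 4) - r)
          = ((r : ℤ) ^ (2 * (p - 1)) - 1) - ((r : ℤ) ^ 3 - 1) := by
        rw [he, pow_add]; ring
      rw [this]
      exact dvd_sub h1 h2
    rcases hPprime.dvd_mul.mp h3 with h | h
    · exact absurd (hPprime.dvd_of_dvd_pow h) hpr
    · exact h
  -- (F2) : p ∣ α - 2β - s*r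
  have hF2 : (p : ℤ) ∣ α - 2 * β - s * r := by
    -- r+1 = -r² + s*p
    have hkey : ((r : ℤ) + 1) = -(r : ℤ) ^ 2 + s * p := by linarith [hs]
    have h := aux_pow_modsq (-(r : ℤ) ^ 2) s (p : ℤ) (p - 2)
    have hpe : p - 2 + 1 = p - 1 := by omega
    rw [hpe] at h
    have hcast : ((p - 1 : ℕ) : ℤ) = (p : ℤ) - 1 := by
      push_cast [Nat.cast_sub hp.one_le]; ring
    rw [hcast] at h
    rw [← hkey] at h
    -- parities
    have hodd : Odd p := hp.odd_of_ne_two (by omega)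
    obtain ⟨k, hk⟩ := hodd
    have hev : (-(r : ℤ) ^ 2) ^ (p - 1) = ((r : ℤ) ^ (p - 1)) ^ 2 := by
      have h1 : Even (p - 1) := ⟨k, by omega⟩
      rw [h1.neg_pow, ← pow_mul, ← pow_mul, Nat.mul_comm]
    have hod : (-(r : ℤ) ^ 2) ^ (p - 2) = -((r : ℤ) ^ (2 * p - 4)) := by
      have h1 : Odd (p - 2) := ⟨k - 1, by omega⟩
      rw [h1.neg_pow, ← pow_mul]
      congr 2
      omega
    rw [hev, hod, hα, hβ] at h
    -- h : p^2 ∣ (1+αp) - ((1+βp)^2 + (p-1)*(-(r^(2p-4)))*s*p)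
    obtain ⟨d, hd⟩ := h
    obtain ⟨e, he⟩ := hF3
    have hr24 : ((r : ℤ)) ^ (2 * p - 4) = (r : ℤ) + (p : ℤ) * e := by linarith
    refine ⟨d + β ^ 2 - s * (r : ℤ) ^ (2 * p - 4) + s * e, ?_⟩
    apply mul_left_cancel₀ (ne_of_gt hPpos)
    linear_combination hd + (p : ℤ) * s * hr24
  -- reduce goal mod p^2 using α, β
  have hA : (p : ℤ) ^ 2 ∣ ((r : ℤ) + 1) ^ ((r + 1) * (p - 1))
      - (1 + ((r : ℤ) + 1) * α * p) := by
    have e : ((r : ℤ) + 1) ^ ((r + 1) * (p - 1)) = (1 + α * p) ^ (r + 1) := by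
      rw [mul_comm, pow_mul, hα]
    rw [e]
    have h := aux_pow_modsq 1 α (p : ℤ) r
    simpa [mul_comm, mul_assoc, mul_left_comm, add_comm, add_left_comm, add_assoc] using h
  have hB : (p : ℤ) ^ 2 ∣ (r : ℤ) ^ (r * (p - 1)) - (1 + (r : ℤ) * β * p) := by
    have e : (r : ℤ) ^ (r * (p - 1)) = (1 + β * p) ^ r := by
      rw [mul_comm, pow_mul, hβ]
    rw [e]
    have h := aux_pow_modsq 1 β (p : ℤ) (r - 1)
    have hre : r - 1 + 1 = r := by omega
    rw [hre] at h
    simpa [mul_comm, mul_assoc, mul_left_comm] using h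
  -- main divisibility: p ∣ (r+1)α - rβ
  have hmain : (p : ℤ) ∣ ((r : ℤ) + 1) * α - (r : ℤ) * β := by
    have h3 : (p : ℤ) ∣ 3 * (((r : ℤ) + 1) * α - (r : ℤ) * β) := by
      have hid : 3 * (((r : ℤ) + 1) * α - (r : ℤ) * β)
          = 3 * ((r : ℤ) + 1) * (α - 2 * β - s * r)
            + ((r : ℤ) + 2) * (3 * β + ((r : ℤ) - 1) * s)
            + 2 * s * ((r : ℤ) ^ 2 + r + 1) := by ring
      rw [hid]
      have hD3 : (p : ℤ) ∣ (r : ℤ) ^ 2 + r + 1 := ⟨s, hs⟩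
      exact dvd_add (dvd_add (hF2.mul_left _) (hF1.mul_left _)) (hD3.mul_left _)
    rcases hPprime.dvd_mul.mp h3 with h | h
    · exfalso
      have := Int.le_of_dvd (by norm_num) h
      omega
    · exact h
  -- assemble
  obtain ⟨c, hc⟩ := hmain
  obtain ⟨a, ha⟩ := hA
  obtain ⟨b, hb⟩ := hB
  refine ⟨a - b + c, ?_⟩
  have : ((r : ℤ) + 1) * α * p - (r : ℤ) * β * p = c * p ^ 2 := by
    rw [pow_two]; nlinarith [hc]
  linarith [ha, hb, this]
end

section
/- Let F be a field, n ≥ 1 an integer, and y₁, …, yₙ ∈ F pairwise distinct. Let c ∈ F and d₁, …, dₙ ∈ F satisfy, for each integer j with 0 ≤ j ≤ n−1: Σ_{k=1}^{n} d_k · y_k^j = c if j = n−1, and Σ_{k=1}^{n} d_k · y_k^j = 0 if j < n−1. Then Σ_{k=1}^{n} d_k · y_k^{n+2} = c · (S₁³ − 2·S₁·S₂ + S₃), where S₁, S₂, S₃ are the elementary symmetric polynomials of degrees 1, 2, 3 in y₁, …, yₙ (taken to be 0 when the degree exceeds n). -/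
open Finset

/-- `esymmS y i` is the elementary symmetric polynomial of degree `i` in `y₁, …, yₙ`
(equal to `0` when `i > n`). -/
noncomputable def esymmS {F : Type*} [CommRing F] {n : ℕ} (y : Fin n → F) (i : ℕ) : F :=
  ∑ t ∈ Finset.powersetCard i (Finset.univ : Finset (Fin n)), ∏ j ∈ t, y j

open Polynomial in
lemma esymmS_coeff {F : Type*} [Field F] {n : ℕ} (y : Fin n → F) (k : ℕ) (hk : k ≤ n) :
    (∏ i : Fin n, (X - C (y i))).coeff k = (-1) ^ (n - k) * esymmS y (n - k) := by
  have hcard : Multiset.card ((Finset.univ.val : Multiset (Fin n)).map y) = n := by simp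
  have h := Multiset.prod_X_sub_C_coeff ((Finset.univ.val : Multiset (Fin n)).map y)
    (k := k) (by rw [hcard]; exact hk)
  rw [hcard, Finset.esymm_map_val, Multiset.map_map] at h
  have h2 : (∏ i : Fin n, (X - C (y i))) =
      ((Finset.univ.val : Multiset (Fin n)).map ((fun t => X - C t) ∘ y)).prod := rfl
  rw [h2, h, esymmS]

open Polynomial in
lemma key_rec {F : Type*} [Field F] {n : ℕ} (y d : Fin n → F) (m : ℕ) :
    (∑ k : Fin n, d k * y k ^ (n + m)) =
      ∑ j ∈ Finset.range n,
        -((∏ i : Fin n, (X - C (y i))).coeff j) * ∑ k : Fin n, d k * y k ^ (j + m) := by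
  set p : Polynomial F := ∏ i : Fin n, (X - C (y i)) with hp
  have hmonic : p.Monic := monic_prod_of_monic _ _ fun i _ => monic_X_sub_C _
  have hdeg : p.natDegree = n := by
    rw [hp, natDegree_prod]
    · simp
    · intro i _; exact X_sub_C_ne_zero _
  have heval : ∀ k : Fin n, p.eval (y k) = 0 := by
    intro k
    rw [hp, eval_prod]
    exact Finset.prod_eq_zero (Finset.mem_univ k) (by simp)
  have hcn : p.coeff n = 1 := by rw [← hdeg]; exact hmonic.coeff_natDegree
  have hroot : ∀ k : Fin n, y k ^ n = ∑ j ∈ Finset.range n, -(p.coeff j) * y k ^ j := by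
    intro k
    have h2 := Polynomial.eval_eq_sum_range (p := p) (y k)
    rw [hdeg, Finset.sum_range_succ, heval k, hcn] at h2
    simp only [neg_mul, Finset.sum_neg_distrib]
    linear_combination -h2
  have step : ∀ k : Fin n, d k * y k ^ (n + m) =
      ∑ j ∈ Finset.range n, -(p.coeff j) * (d k * y k ^ (j + m)) := by
    intro k
    have h3 : d k * y k ^ (n + m) = y k ^ n * (d k * y k ^ m) := by rw [pow_add]; ring
    rw [h3, hroot k, Finset.sum_mul]
    exact Finset.sum_congr rfl fun j _ => by rw [pow_add]; ring
  rw [Finset.sum_congr rfl fun k _ => step k, Finset.sum_comm]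
  exact Finset.sum_congr rfl fun j _ => (Finset.mul_sum _ _ _).symm

/-- The linear-algebra evaluation from the proof of Lemma 3.4: if
`Σ d_k y_k^j = 0` for `0 ≤ j < n−1` and `Σ d_k y_k^(n−1) = c`, with the `y_k`
pairwise distinct, then `Σ d_k y_k^(n+2) = c (S₁³ − 2 S₁ S₂ + S₃)`. -/
theorem stmt_9 {F : Type*} [Field F] (n : ℕ) (hn : 1 ≤ n)
    (y : Fin n → F) (hy : Function.Injective y)
    (c : F) (d : Fin n → F)
    (hsys : ∀ j : ℕ, j < n →
      (∑ k : Fin n, d k * y k ^ j) = if j = n - 1 then c else 0) :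
    (∑ k : Fin n, d k * y k ^ (n + 2)) =
      c * (esymmS y 1 ^ 3 - 2 * esymmS y 1 * esymmS y 2 + esymmS y 3) := by
  classical
  match n, hn, y, hy, d, hsys with
  | 1, _, y, hy, d, hsys =>
    have h1 : esymmS y 1 = y 0 := by
      rw [esymmS, show Finset.powersetCard 1 (Finset.univ : Finset (Fin 1)) =
        {{0}} by decide]
      simp
    have h2 : esymmS y 2 = 0 := by
      rw [esymmS, Finset.powersetCard_eq_empty.2 (by simp), Finset.sum_empty]
    have h3 : esymmS y 3 = 0 := by
      rw [esymmS, Finset.powersetCard_eq_empty.2 (by simp), Finset.sum_empty]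
    have hs0 := hsys 0 (by norm_num)
    simp only [Fin.sum_univ_one, pow_zero, mul_one] at hs0 ⊢
    norm_num at hs0
    rw [h1, h2, h3, hs0]; ring
  | 2, _, y, hy, d, hsys =>
    have h1 : esymmS y 1 = y 0 + y 1 := by
      rw [esymmS, show Finset.powersetCard 1 (Finset.univ : Finset (Fin 2)) =
        {{0}, {1}} by decide]
      simp
    have h2 : esymmS y 2 = y 0 * y 1 := by
      rw [esymmS, show Finset.powersetCard 2 (Finset.univ : Finset (Fin 2)) =
        {{0, 1}} by decide]
      simp
    have h3 : esymmS y 3 = 0 := by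
      rw [esymmS, Finset.powersetCard_eq_empty.2 (by simp), Finset.sum_empty]
    have hs0 := hsys 0 (by norm_num)
    have hs1 := hsys 1 (by norm_num)
    norm_num [Fin.sum_univ_two] at hs0 hs1 ⊢
    rw [h1, h2, h3]
    linear_combination (-(y 0^3*y 1 + y 0^2*y 1^2 + y 0*y 1^3))*hs0 +
      (y 0^3 + y 0^2*y 1 + y 0*y 1^2 + y 1^3)*hs1
  | (m+3), _, y, hy, d, hsys =>
    set e : ℕ → F := esymmS y with he
    set p : Polynomial F := ∏ i : Fin (m+3), (Polynomial.X - Polynomial.C (y i)) with hp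
    have ha2 : -(p.coeff (m+2)) = e 1 := by
      rw [hp, esymmS_coeff y (m+2) (by omega), show m + 3 - (m+2) = 1 by omega, he]
      ring
    have ha1 : -(p.coeff (m+1)) = -(e 2) := by
      rw [hp, esymmS_coeff y (m+1) (by omega), show m + 3 - (m+1) = 2 by omega, he]
      ring
    have ha0 : -(p.coeff m) = e 3 := by
      rw [hp, esymmS_coeff y m (by omega), show m + 3 - m = 3 by omega, he]
      ring
    have hzero : ∀ j, j < m + 2 → (∑ k : Fin (m+3), d k * y k ^ j) = 0 := by
      intro j hj
      rw [hsys j (by omega), if_neg (by omega)]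
    have hc : (∑ k : Fin (m+3), d k * y k ^ (m+2)) = c := by
      rw [hsys (m+2) (by omega), if_pos (by omega)]
    -- step A : power n
    have hA : (∑ k : Fin (m+3), d k * y k ^ (m+3)) = e 1 * c := by
      have H := key_rec y d 0
      rw [Finset.sum_range_succ, Finset.sum_range_succ, Finset.sum_range_succ] at H
      rw [← hp] at H
      simp only [Nat.add_zero] at H
      have hz : (∑ j ∈ Finset.range m,
          -(p.coeff j) * ∑ k : Fin (m+3), d k * y k ^ j) = 0 :=
        Finset.sum_eq_zero fun j hj => by
          rw [hzero j (by simp only [Finset.mem_range] at hj; omega), mul_zero]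
      rw [hz, hzero m (by omega), hzero (m + 1) (by omega), hc] at H
      rw [H, ha2]; ring
    -- step B : power n+1
    have hB : (∑ k : Fin (m+3), d k * y k ^ (m+4)) = (e 1 * e 1 - e 2) * c := by
      have H := key_rec y d 1
      rw [Finset.sum_range_succ, Finset.sum_range_succ, Finset.sum_range_succ] at H
      have hz : (∑ j ∈ Finset.range m,
          -(p.coeff j) * ∑ k : Fin (m+3), d k * y k ^ (j + 1)) = 0 :=
        Finset.sum_eq_zero fun j hj => by
          rw [hzero (j + 1) (by simp only [Finset.mem_range] at hj; omega), mul_zero]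
      rw [← hp] at H
      simp only [show m + 1 + 1 = m + 2 from rfl, show m + 2 + 1 = m + 3 from rfl,
        show m + 3 + 1 = m + 4 from rfl] at H
      rw [hz, hzero (m + 1) (by omega), hc, hA] at H
      rw [H, ha2, ha1]; ring
    -- step C : power n+2
    have H := key_rec y d 2
    rw [Finset.sum_range_succ, Finset.sum_range_succ, Finset.sum_range_succ] at H
    have hz : (∑ j ∈ Finset.range m,
        -(p.coeff j) * ∑ k : Fin (m+3), d k * y k ^ (j + 2)) = 0 :=
      Finset.sum_eq_zero fun j hj => by
        rw [hzero (j + 2) (by simp only [Finset.mem_range] at hj; omega), mul_zero]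
    rw [← hp] at H
    simp only [show m + 1 + 2 = m + 3 from rfl, show m + 2 + 2 = m + 4 from rfl] at H
    rw [hz, hc, hA, hB] at H
    rw [H, ha2, ha1, ha0]
    ring
end

section
/- Let p be an odd prime and let a, b, c, a', b', c', t be integers with p dividing none of a, b, c, a', b', c', t. Suppose a + b + c = 0, a' + b' + c' = 0, a' ≡ t·a (mod p), and b' ≡ t·b (mod p). Then p² divides (a'^p + b'^p + c'^p) − t·(a^p + b^p + c^p). -/
/-- Homogeneity of the Fermat quotient expression (used in the proof of Theorem 1.4):
if `a + b + c = 0 = a' + b' + c'` with none of the entries divisible by the odd prime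
`p`, and `a' ≡ ta`, `b' ≡ tb (mod p)`, then
`p² ∣ (a'^p + b'^p + c'^p) − t (a^p + b^p + c^p)`. -/
theorem stmt_10 (p : ℕ) (hp : p.Prime) (hodd : p ≠ 2)
    (a b c a' b' c' t : ℤ)
    (ha : ¬ (p : ℤ) ∣ a) (hb : ¬ (p : ℤ) ∣ b) (hc : ¬ (p : ℤ) ∣ c)
    (ha' : ¬ (p : ℤ) ∣ a') (hb' : ¬ (p : ℤ) ∣ b') (hc' : ¬ (p : ℤ) ∣ c')
    (ht : ¬ (p : ℤ) ∣ t)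
    (habc : a + b + c = 0) (habc' : a' + b' + c' = 0)
    (hta : (p : ℤ) ∣ a' - t * a) (htb : (p : ℤ) ∣ b' - t * b) :
    (p : ℤ) ^ 2 ∣ (a' ^ p + b' ^ p + c' ^ p) - t * (a ^ p + b ^ p + c ^ p) := by
  haveI : Fact p.Prime := ⟨hp⟩
  have htc : (p : ℤ) ∣ c' - t * c := by
    have : c' - t * c = -((a' - t * a) + (b' - t * b)) := by linear_combination habc' - t * habc
    rw [this]
    exact dvd_neg.mpr (dvd_add hta htb)
  have h1 := dvd_sub_pow_of_dvd_sub hta 1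
  have h2 := dvd_sub_pow_of_dvd_sub htb 1
  have h3 := dvd_sub_pow_of_dvd_sub htc 1
  rw [pow_one] at h1 h2 h3
  -- Fermat: p ∣ t^p - t
  have hf : (p : ℤ) ∣ t ^ p - t := by
    have : ((t ^ p - t : ℤ) : ZMod p) = 0 := by
      push_cast
      rw [ZMod.pow_card]
      ring
    exact_mod_cast (ZMod.intCast_zmod_eq_zero_iff_dvd _ _).mp this
  have hs : (p : ℤ) ∣ a ^ p + b ^ p + c ^ p := by
    have : ((a ^ p + b ^ p + c ^ p : ℤ) : ZMod p) = 0 := by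
      push_cast
      rw [ZMod.pow_card, ZMod.pow_card, ZMod.pow_card]
      have : ((a + b + c : ℤ) : ZMod p) = 0 := by rw [habc]; simp
      push_cast at this
      linear_combination this
    exact_mod_cast (ZMod.intCast_zmod_eq_zero_iff_dvd _ _).mp this
  have h4 : (p : ℤ) ^ 2 ∣ (t ^ p - t) * (a ^ p + b ^ p + c ^ p) := by
    rw [sq]
    exact mul_dvd_mul hf hs
  have key : (a' ^ p + b' ^ p + c' ^ p) - t * (a ^ p + b ^ p + c ^ p)
      = (a' ^ p - (t * a) ^ p) + (b' ^ p - (t * b) ^ p) + (c' ^ p - (t * c) ^ p)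
        + (t ^ p - t) * (a ^ p + b ^ p + c ^ p) := by
    rw [mul_pow, mul_pow, mul_pow]; ring
  rw [key]
  exact dvd_add (dvd_add (dvd_add h1 h2) h3) h4
end
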